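/- There is a constant C₁>1, depending only on C₀, such that for every finite Borel measure ν on T² and all 0 < ρ ≤ δ < 1, one has ‖ν‖_δ ≤ C₁·‖ν‖_ρ. -/

import Mathlib

open MeasureTheory Metric Filter Topology
open scoped ENNReal

/-- The flat two-torus `ℝ²/ℤ²`, realized as the `L²`-product of two circles of length one. -/
abbrev T2 : Type := PiLp 2 fun _ : Fin 2 => AddCircle (1 : ℝ)

noncomputable instance : MeasurableSpace T2 := borel T2
instance : BorelSpace T2 := ⟨rfl⟩
instance : CompactSpace T2 :=
  (PiLp.homeomorph 2 fun _ : Fin 2 => AddCircle (1 : ℝ)).symm.compactSpace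

/-- The condition `C₀⁻¹ ≤ dm/dLeb ≤ C₀` for the smooth measure `m` in terms of the Haar
probability measure `Leb`. -/
def DensityBounds (C₀ : ℝ) (Leb m : Measure T2) : Prop :=
  ∀ s : Set T2, MeasurableSet s →
    ENNReal.ofReal C₀⁻¹ * Leb s ≤ m s ∧ m s ≤ ENNReal.ofReal C₀ * Leb s

/-- The `ρ`-inner product `⟨ν,ν'⟩_ρ = ρ⁻⁴ ∫ ν(B(z,ρ)) ν'(B(z,ρ)) dm(z)`. -/
noncomputable def rinner (m ν ν' : Measure T2) (ρ : ℝ) : ℝ :=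
  (1 / ρ ^ 4) * ∫ z, (ν (ball z ρ)).toReal * (ν' (ball z ρ)).toReal ∂m

/-- The `ρ`-semi-norm `‖ν‖_ρ = ⟨ν,ν⟩_ρ^{1/2}`. -/
noncomputable def rnorm (m ν : Measure T2) (ρ : ℝ) : ℝ :=
  Real.sqrt (rinner m ν ν ρ)

/-!
If every `ρ`-ball has `m`-mass at least `a` and every `2δ`-ball has `m`-mass at most `b`, then,
since the `ρ`-balls centred in `B(z, δ)` lie in `B(z, 2δ)`, Fubini gives
`a ν(B(z, δ)) ≤ ∫_{B(z, 2δ)} ν(B(w, ρ)) dm(w)`. Cauchy–Schwarz and a second application of Fubini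
turn this into `a² ∫ ν(B(z, δ))² dm ≤ b² ∫ ν(B(w, ρ))² dm`. On the torus `a ≍ C₀⁻¹ ρ²` and
`b ≍ C₀ δ²`, so `(b / a)²` exactly compensates the normalizations `δ⁻⁴` and `ρ⁻⁴`, and
`C₁ = 64 C₀²` works.
-/

section BallAverages

variable {X : Type*} [PseudoMetricSpace X] [SecondCountableTopology X] [MeasurableSpace X]
  [OpensMeasurableSpace X]

theorem measurableSet_dist_lt (r : ℝ) : MeasurableSet {p : X × X | dist p.2 p.1 < r} :=
  (isOpen_lt (continuous_snd.dist continuous_fst) continuous_const).measurableSet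

theorem measurable_measure_ball (ν : Measure X) [SFinite ν] (r : ℝ) :
    Measurable fun x => ν (ball x r) :=
  measurable_measure_prodMk_left (measurableSet_dist_lt r)

theorem lintegral_measure_ball_comm (μ ν : Measure X) [SFinite μ] [SFinite ν] (r : ℝ) :
    ∫⁻ x, μ (ball x r) ∂ν = ∫⁻ y, ν (ball y r) ∂μ :=
  calc ∫⁻ x, μ (ball x r) ∂ν = ν.prod μ {p | dist p.2 p.1 < r} :=
        (Measure.prod_apply (measurableSet_dist_lt r)).symm
    _ = ∫⁻ y, ν (ball y r) ∂μ := by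
        rw [Measure.prod_apply_symm (measurableSet_dist_lt r)]
        refine lintegral_congr fun y => congrArg ν (Set.ext fun x => ?_)
        exact iff_of_eq (congrArg (· < r) (dist_comm y x))

theorem lintegral_setLIntegral_ball (μ : Measure X) [SFinite μ] {f : X → ℝ≥0∞}
    (hf : Measurable f) (r : ℝ) :
    ∫⁻ x, ∫⁻ y in ball x r, f y ∂μ ∂μ = ∫⁻ y, f y * μ (ball y r) ∂μ := by
  simpa only [withDensity_apply _ measurableSet_ball,
    lintegral_withDensity_eq_lintegral_mul _ hf (measurable_measure_ball μ r), Pi.mul_apply] using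
    lintegral_measure_ball_comm (μ.withDensity f) μ r

theorem mul_measure_ball_le_setLIntegral (μ ν : Measure X) [SFinite μ] [SFinite ν] {ρ δ : ℝ}
    (hρδ : ρ ≤ δ) {a : ℝ≥0∞} (ha : ∀ x, a ≤ μ (ball x ρ)) (z : X) :
    a * ν (ball z δ) ≤ ∫⁻ y in ball z (2 * δ), ν (ball y ρ) ∂μ := calc
  a * ν (ball z δ) = ∫⁻ _ in ball z δ, a ∂ν := (setLIntegral_const _ _).symm
  _ ≤ ∫⁻ x in ball z δ, μ.restrict (ball z (2 * δ)) (ball x ρ) ∂ν := by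
    refine setLIntegral_mono (measurable_measure_ball _ ρ) fun x hx => ?_
    rw [Measure.restrict_eq_self _ (ball_subset_ball' ?_)]
    · exact ha x
    · linarith [mem_ball.1 hx]
  _ = ∫⁻ y in ball z (2 * δ), ν.restrict (ball z δ) (ball y ρ) ∂μ :=
    lintegral_measure_ball_comm _ _ ρ
  _ ≤ ∫⁻ y in ball z (2 * δ), ν (ball y ρ) ∂μ :=
    lintegral_mono fun y => Measure.restrict_apply_le _ _

theorem sq_setLIntegral_le {α : Type*} [MeasurableSpace α] (μ : Measure α) (s : Set α)
    {f : α → ℝ≥0∞} (hf : AEMeasurable f (μ.restrict s)) :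
    (∫⁻ x in s, f x ∂μ) ^ 2 ≤ μ s * ∫⁻ x in s, f x ^ 2 ∂μ := by
  have hsqrt (x : ℝ≥0∞) : (x ^ 2) ^ (2⁻¹ : ℝ) = x := by
    simpa using ENNReal.pow_rpow_inv_natCast two_ne_zero x
  have hsq (x : ℝ≥0∞) : (x ^ (2⁻¹ : ℝ)) ^ 2 = x := by
    simpa using ENNReal.rpow_inv_natCast_pow two_ne_zero x
  have holder := ENNReal.lintegral_mul_norm_pow_le (μ := μ.restrict s) (p := 2⁻¹) (q := 2⁻¹)
    (aemeasurable_const (b := 1)) (hf.pow_const 2) (by norm_num) (by norm_num) (by norm_num)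
  simp only [ENNReal.one_rpow, one_mul, lintegral_const, Measure.restrict_apply_univ,
    hsqrt] at holder
  calc (∫⁻ x in s, f x ∂μ) ^ 2
      ≤ (μ s ^ (2⁻¹ : ℝ) * (∫⁻ x in s, f x ^ 2 ∂μ) ^ (2⁻¹ : ℝ)) ^ 2 := by gcongr
    _ = μ s * ∫⁻ x in s, f x ^ 2 ∂μ := by rw [mul_pow, hsq, hsq]

theorem sq_mul_lintegral_measure_ball_sq_le (μ ν : Measure X) [SFinite μ] [SFinite ν] {ρ δ : ℝ}
    (hρδ : ρ ≤ δ) {a b : ℝ≥0∞} (hb : b ≠ ∞) (ha : ∀ x, a ≤ μ (ball x ρ))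
    (hμb : ∀ x, μ (ball x (2 * δ)) ≤ b) :
    a ^ 2 * ∫⁻ x, ν (ball x δ) ^ 2 ∂μ ≤ b ^ 2 * ∫⁻ x, ν (ball x ρ) ^ 2 ∂μ := by
  have hν_meas := (measurable_measure_ball ν ρ).pow_const 2
  calc a ^ 2 * ∫⁻ x, ν (ball x δ) ^ 2 ∂μ = ∫⁻ x, (a * ν (ball x δ)) ^ 2 ∂μ := by
        rw [← lintegral_const_mul _ ((measurable_measure_ball ν δ).pow_const 2)]
        simp only [mul_pow]
    _ ≤ ∫⁻ x, μ (ball x (2 * δ)) * ∫⁻ y in ball x (2 * δ), ν (ball y ρ) ^ 2 ∂μ ∂μ :=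
        lintegral_mono fun x =>
          (pow_le_pow_left' (mul_measure_ball_le_setLIntegral μ ν hρδ ha x) 2).trans
            (sq_setLIntegral_le μ _ (measurable_measure_ball ν ρ).aemeasurable)
    _ ≤ ∫⁻ x, b * ∫⁻ y in ball x (2 * δ), ν (ball y ρ) ^ 2 ∂μ ∂μ := by
        gcongr with x
        exact hμb x
    _ = b * ∫⁻ y, ν (ball y ρ) ^ 2 * μ (ball y (2 * δ)) ∂μ := by
        rw [lintegral_const_mul' _ _ hb, lintegral_setLIntegral_ball μ hν_meas]
    _ ≤ b * ∫⁻ y, ν (ball y ρ) ^ 2 * b ∂μ := by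
        gcongr with y
        exact hμb y
    _ = b ^ 2 * ∫⁻ x, ν (ball x ρ) ^ 2 ∂μ := by
        rw [lintegral_mul_const _ hν_meas]
        ring

end BallAverages

instance : IsProbabilityMeasure (volume : Measure (AddCircle (1 : ℝ))) :=
  ⟨by simp [AddCircle.measure_univ]⟩

noncomputable def torusHaar : Measure T2 :=
  (volume : Measure (Fin 2 → AddCircle (1 : ℝ))).map (WithLp.toLp 2)

theorem measurable_toLp_torus : Measurable (WithLp.toLp 2 : (Fin 2 → AddCircle (1 : ℝ)) → T2) :=
  (PiLp.continuous_toLp 2 _).measurable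

instance : IsProbabilityMeasure torusHaar :=
  Measure.isProbabilityMeasure_map measurable_toLp_torus.aemeasurable

instance : torusHaar.IsAddHaarMeasure :=
  (WithLp.addEquiv 2 (Fin 2 → AddCircle (1 : ℝ))).symm.isAddHaarMeasure_map _
    (PiLp.continuous_toLp 2 _) (PiLp.continuous_ofLp 2 _)

theorem eq_torusHaar (Leb : Measure T2) [IsProbabilityMeasure Leb] [Leb.IsAddHaarMeasure] :
    Leb = torusHaar :=
  Measure.isAddHaarMeasure_eq_of_isProbabilityMeasure _ _

theorem torusHaar_ball_le (z : T2) (r : ℝ) :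
    torusHaar (ball z r) ≤ ENNReal.ofReal (2 * r) ^ 2 := by
  rw [torusHaar, Measure.map_apply measurable_toLp_torus measurableSet_ball]
  have hsub : WithLp.toLp 2 ⁻¹' ball z r ⊆ Set.univ.pi fun i => closedBall (z i) r :=
    fun w hw i _ => (PiLp.dist_apply_le (WithLp.toLp 2 w) z i).trans (mem_ball.1 hw).le
  refine (measure_mono hsub).trans ?_
  simp only [volume_pi_pi, AddCircle.volume_closedBall, Finset.prod_const, Finset.card_univ,
    Fintype.card_fin]
  gcongr
  exact min_le_right _ _

theorem torusHaar_ball_ge (z : T2) {r : ℝ} (hr : 0 < r) (hr₂ : r ≤ 2) :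
    ENNReal.ofReal (r / 2) ^ 2 ≤ torusHaar (ball z r) := by
  rw [torusHaar, Measure.map_apply measurable_toLp_torus measurableSet_ball]
  have hsub : (Set.univ.pi fun i => closedBall (z i) (r / 4)) ⊆ WithLp.toLp 2 ⁻¹' ball z r := by
    intro w hw
    have hcoord (i : Fin 2) : dist (w i) (z i) ^ 2 ≤ (r / 4) ^ 2 :=
      pow_le_pow_left₀ dist_nonneg (hw i (Set.mem_univ i)) 2
    rw [Set.mem_preimage, mem_ball, PiLp.dist_eq_of_L2, Real.sqrt_lt' hr, Fin.sum_univ_two]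
    nlinarith [hcoord 0, hcoord 1]
  refine le_trans ?_ (measure_mono hsub)
  simp only [volume_pi_pi, AddCircle.volume_closedBall, Finset.prod_const, Finset.card_univ,
    Fintype.card_fin]
  rw [min_eq_right (by linarith), show 2 * (r / 4) = r / 2 by ring]

theorem rinner_self_eq (m ν : Measure T2) [IsFiniteMeasure ν] (r : ℝ) :
    rinner m ν ν r = (∫⁻ z, ν (ball z r) ^ 2 ∂m).toReal / r ^ 4 := by
  rw [rinner, ← integral_toReal ((measurable_measure_ball ν r).pow_const 2).aemeasurable
    (ae_of_all _ fun z => by finiteness)]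
  simp only [sq, ENNReal.toReal_mul, one_div, inv_mul_eq_div]

theorem rnorm_le_of_measure_ball_bounds (m ν : Measure T2) [IsFiniteMeasure m]
    [IsFiniteMeasure ν] {ρ δ a b : ℝ} (hρ : 0 < ρ) (hρδ : ρ ≤ δ) (ha : 0 < a) (hb : 0 ≤ b)
    (hma : ∀ x, ENNReal.ofReal a ≤ m (ball x ρ))
    (hmb : ∀ x, m (ball x (2 * δ)) ≤ ENNReal.ofReal b) :
    rnorm m ν δ ≤ (ρ / δ) ^ 2 * (b / a) * rnorm m ν ρ := by
  set Iρ := ∫⁻ z, ν (ball z ρ) ^ 2 ∂m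
  set Iδ := ∫⁻ z, ν (ball z δ) ^ 2 ∂m
  have hIρ : Iρ ≠ ∞ := by
    refine ((lintegral_mono fun z => ?_).trans_lt (lintegral_const_lt_top (c := ν Set.univ ^ 2)
      (by finiteness))).ne
    exact pow_le_pow_left' (measure_mono (Set.subset_univ _)) 2
  have hreal : a ^ 2 * Iδ.toReal ≤ b ^ 2 * Iρ.toReal := by
    have := ENNReal.toReal_mono (by finiteness)
      (sq_mul_lintegral_measure_ball_sq_le m ν hρδ ENNReal.ofReal_ne_top hma hmb)
    simpa [ENNReal.toReal_ofReal ha.le, ENNReal.toReal_ofReal hb] using this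
  have hinner : rinner m ν ν δ ≤ ((ρ / δ) ^ 2 * (b / a)) ^ 2 * rinner m ν ν ρ := by
    have hδ : 0 < δ := hρ.trans_le hρδ
    rw [rinner_self_eq, rinner_self_eq]
    calc Iδ.toReal / δ ^ 4 ≤ b ^ 2 * Iρ.toReal / a ^ 2 / δ ^ 4 := by
          gcongr
          rwa [le_div_iff₀ (by positivity), mul_comm]
      _ = ((ρ / δ) ^ 2 * (b / a)) ^ 2 * (Iρ.toReal / ρ ^ 4) := by
          field_simp
  calc rnorm m ν δ ≤ √(((ρ / δ) ^ 2 * (b / a)) ^ 2 * rinner m ν ν ρ) := Real.sqrt_le_sqrt hinner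
    _ = (ρ / δ) ^ 2 * (b / a) * rnorm m ν ρ := by
        rw [Real.sqrt_mul (sq_nonneg _), Real.sqrt_sq (by positivity), rnorm]

theorem rnorm_change_of_scale
    (C₀ : ℝ) (hC₀ : 1 ≤ C₀) :
    ∃ C₁ : ℝ, 1 < C₁ ∧
      ∀ (Leb m : Measure T2), IsProbabilityMeasure Leb → Leb.IsAddHaarMeasure →
        IsProbabilityMeasure m → DensityBounds C₀ Leb m →
        ∀ (ν : Measure T2), IsFiniteMeasure ν →
          ∀ ρ δ : ℝ, 0 < ρ → ρ ≤ δ → δ < 1 →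
            rnorm m ν δ ≤ C₁ * rnorm m ν ρ := by
  refine ⟨64 * C₀ ^ 2, by nlinarith, ?_⟩
  intro Leb m _ _ _ hm ν _ ρ δ hρ hρδ hδ
  obtain rfl := eq_torusHaar Leb
  have hC₀pos : 0 < C₀ := by linarith
  have hma (x : T2) : ENNReal.ofReal (C₀⁻¹ * (ρ / 2) ^ 2) ≤ m (ball x ρ) := calc
    _ = ENNReal.ofReal C₀⁻¹ * ENNReal.ofReal (ρ / 2) ^ 2 := by
      rw [ENNReal.ofReal_mul (by positivity), ENNReal.ofReal_pow (by positivity)]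
    _ ≤ ENNReal.ofReal C₀⁻¹ * torusHaar (ball x ρ) := by
      gcongr
      exact torusHaar_ball_ge x hρ (by linarith)
    _ ≤ m (ball x ρ) := (hm _ measurableSet_ball).1
  have hmb (x : T2) : m (ball x (2 * δ)) ≤ ENNReal.ofReal (C₀ * (4 * δ) ^ 2) := calc
    _ ≤ ENNReal.ofReal C₀ * torusHaar (ball x (2 * δ)) := (hm _ measurableSet_ball).2
    _ ≤ ENNReal.ofReal C₀ * ENNReal.ofReal (2 * (2 * δ)) ^ 2 := by
      gcongr
      exact torusHaar_ball_le x _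
    _ = ENNReal.ofReal (C₀ * (4 * δ) ^ 2) := by
      rw [ENNReal.ofReal_mul hC₀pos.le, ← ENNReal.ofReal_pow (by linarith)]
      ring_nf
  calc rnorm m ν δ ≤ (ρ / δ) ^ 2 * (C₀ * (4 * δ) ^ 2 / (C₀⁻¹ * (ρ / 2) ^ 2)) * rnorm m ν ρ :=
        rnorm_le_of_measure_ball_bounds m ν hρ hρδ (by positivity) (by positivity) hma hmb
    _ = 64 * C₀ ^ 2 * rnorm m ν ρ := by
        field_simp [(hρ.trans_le hρδ).ne']
        ring
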